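/- Let R be a commutative ring and T a 1-tilting module. Then every ideal J with M = JM for all M in the tilting class T^⊥ is faithful, i.e., Hom_R(R/J, R) = 0 (equivalently ann J = 0). -/

import Mathlib

/-!
The tilting sequence embeds `R` into a summand `T₀` of some `T^(X)`, and `T^(X) ∈ Gen(T)`, so
`J • T^(X) = T^(X)`. Any `r` with `r J = 0` therefore annihilates `T^(X)`, in particular the image
of `1` in `T₀`; since `R → T₀` is injective, `r = 0`.
-/

universe u

/-- `ExtVanishes R T N` encodes `Ext¹_R(T, N) = 0`: every short exact sequence
`0 → N → E → T → 0` splits, i.e. every surjection onto `T` with kernel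
isomorphic to `N` admits a section. -/
def ExtVanishes (R : Type u) [Ring R] (T : Type u) [AddCommGroup T]
    [Module R T] (N : Type u) [AddCommGroup N] [Module R N] : Prop :=
  ∀ (E : Type u) [AddCommGroup E] [Module R E] (π : E →ₗ[R] T),
    Function.Surjective π → Nonempty (↥(LinearMap.ker π) ≃ₗ[R] N) →
    ∃ σ : T →ₗ[R] E, π ∘ₗ σ = LinearMap.id

/-- `MemGen R T M` : `M ∈ Gen(T)`, i.e. `M` is a homomorphic image of a direct
sum of copies of `T`. -/
def MemGen (R : Type u) [Ring R] (T : Type u) [AddCommGroup T] [Module R T]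
    (M : Type u) [AddCommGroup M] [Module R M] : Prop :=
  ∃ (X : Type u) (φ : (X →₀ T) →ₗ[R] M), Function.Surjective φ

/-- `MemAdd R T M` : `M ∈ Add(T)`, i.e. `M` is a direct summand of a direct
sum of copies of `T` (witnessed by a split surjection). -/
def MemAdd (R : Type u) [Ring R] (T : Type u) [AddCommGroup T] [Module R T]
    (M : Type u) [AddCommGroup M] [Module R M] : Prop :=
  ∃ (X : Type u) (p : (X →₀ T) →ₗ[R] M) (s : M →ₗ[R] (X →₀ T)),
    p ∘ₗ s = LinearMap.id

/-- `ProjDimLE1 R M` : `M` has projective dimension at most `1`, i.e. `M` is a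
quotient of a free module by a projective submodule. -/
def ProjDimLE1 (R : Type u) [Ring R] (M : Type u) [AddCommGroup M]
    [Module R M] : Prop :=
  ∃ (κ : Type u) (K : Submodule R (κ →₀ R)),
    Module.Projective R ↥K ∧ Nonempty (((κ →₀ R) ⧸ K) ≃ₗ[R] M)

/-- `IsOneTilting R T` : `T` is a 1-tilting module: `pd T ≤ 1`,
`Ext¹_R(T, T^{(X)}) = 0` for every set `X`, and there is an exact sequence
`0 → R → T₀ → T₁ → 0` with `T₀, T₁ ∈ Add(T)` (here `T₀` is realized as a
direct summand of a direct sum of copies of `T`). -/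
def IsOneTilting (R : Type u) [Ring R] (T : Type u) [AddCommGroup T]
    [Module R T] : Prop :=
  ProjDimLE1 R T ∧
  (∀ X : Type u, ExtVanishes R T (X →₀ T)) ∧
  ∃ (X : Type u) (T0 C : Submodule R (X →₀ T)), IsCompl T0 C ∧
    ∃ f : R →ₗ[R] ↥T0, Function.Injective f ∧
      MemAdd R T (↥T0 ⧸ LinearMap.range f)

theorem memGen_finsupp (R : Type u) [Ring R] (T : Type u) [AddCommGroup T] [Module R T]
    (X : Type u) : MemGen R T (X →₀ T) :=
  ⟨X, LinearMap.id, Function.surjective_id⟩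

theorem Module.annihilator_eq_bot_of_injective {R M : Type*} [CommRing R] [AddCommGroup M]
    [Module R M] (f : R →ₗ[R] M) (hf : Function.Injective f) :
    Module.annihilator R M = ⊥ :=
  le_bot_iff.mp <| (f.annihilator_le_of_injective hf).trans_eq <|
    Module.annihilator_eq_bot.mpr inferInstance

theorem Module.le_annihilator_of_mul_eq_bot {R M : Type*} [CommRing R] [AddCommGroup M]
    [Module R M] {I J : Ideal R} (hIJ : I * J = ⊥) (hJ : J • (⊤ : Submodule R M) = ⊤) :
    I ≤ Module.annihilator R M := by
  rw [← Submodule.annihilator_top, Submodule.le_annihilator_iff, ← hJ, ← Submodule.mul_smul, hIJ,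
    Submodule.bot_smul]

/-- Let `R` be a commutative ring and `T` a 1-tilting module
(so the tilting class `T^⊥` equals `Gen(T)`).  Then every ideal `J` with
`M = JM` for all `M` in the tilting class is faithful: `ann J = 0`
(equivalently `Hom_R(R/J, R) = 0`). -/
theorem divisibility_ideal_faithful (R : Type u) [CommRing R]
    (T : Type u) [AddCommGroup T] [Module R T]
    (hT : IsOneTilting R T) (J : Ideal R)
    (hJ : ∀ (M : Type u) [AddCommGroup M] [Module R M],
      MemGen R T M → J • (⊤ : Submodule R M) = ⊤) :
    ∀ r : R, (∀ x ∈ J, r * x = 0) → r = 0 := by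
  intro r hr
  obtain ⟨-, -, X, T0, -, -, f, hf, -⟩ := hT
  have hfaithful : Module.annihilator R (X →₀ T) = ⊥ :=
    Module.annihilator_eq_bot_of_injective (T0.subtype ∘ₗ f) (Subtype.val_injective.comp hf)
  have hrJ : Ideal.span {r} * J = ⊥ :=
    le_bot_iff.mp <| Ideal.span_singleton_mul_le_iff.mpr fun x hx ↦ Ideal.mem_bot.mpr (hr x hx)
  have hr_ann := Module.le_annihilator_of_mul_eq_bot hrJ (hJ _ (memGen_finsupp R T X))
  simpa [hfaithful] using hr_ann (Ideal.mem_span_singleton_self r)
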